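/- arXiv:1503.06668 — 2 statements merged into one kernel-verified Lean document; each statement's English description precedes it below -/
import Mathlib

section
/- Let F be a field of characteristic 0 and let A ∈ M_n(F) be a nil-clean matrix. Then there exists a unique non-negative integer k such that the trace of A equals k·1 (k·1 denoting the image of k in F), and this k satisfies k ≤ n. -/
/-! The nilpotent summand has trace zero, and the trace of an idempotent matrix is the
dimension of its range, i.e. its rank, which is at most `n`; in characteristic zero the
natural number `k` is then determined by `k · 1`. -/

def IsNilClean {R : Type*} [Ring R] (a : R) : Prop :=
  ∃ e n : R, e ^ 2 = e ∧ IsNilpotent n ∧ a = e + n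

theorem Matrix.trace_eq_rank_of_isIdempotentElem {K m : Type*} [Field K] [Fintype m]
    [DecidableEq m] {E : Matrix m m K} (hE : IsIdempotentElem E) : E.trace = E.rank := by
  have hf : IsIdempotentElem (Matrix.toLin' E) := hE.map Matrix.toLinAlgEquiv'
  rw [← Matrix.trace_toLin'_eq, (LinearMap.IsIdempotentElem.isProj_range _ hf).trace]
  rfl

theorem IsNilClean.exists_trace_eq_natCast {K m : Type*} [Field K] [Fintype m]
    [DecidableEq m] {A : Matrix m m K} (hA : IsNilClean A) :
    ∃ k ≤ Fintype.card m, A.trace = k := by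
  obtain ⟨E, N, hE, hN, rfl⟩ := hA
  have hE' : IsIdempotentElem E := by rw [IsIdempotentElem, ← sq, hE]
  refine ⟨E.rank, E.rank_le_card_width, ?_⟩
  rw [Matrix.trace_add, (Matrix.isNilpotent_trace_of_isNilpotent hN).eq_zero, add_zero,
    Matrix.trace_eq_rank_of_isIdempotentElem hE']

/-- Over a field of characteristic `0`, the trace of a nil-clean `n × n` matrix
is `k·1` for a unique natural number `k`, and this `k` satisfies `k ≤ n`. -/
theorem stmt_5 {F : Type*} [Field F] [CharZero F] {n : ℕ}
    (A : Matrix (Fin n) (Fin n) F) (hA : IsNilClean A) :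
    (∃! k : ℕ, A.trace = (k : F)) ∧ ∀ k : ℕ, A.trace = (k : F) → k ≤ n := by
  obtain ⟨k, hkn, hk⟩ := hA.exists_trace_eq_natCast
  have eq_k (j : ℕ) (hj : A.trace = j) : j = k := Nat.cast_injective (hj.symm.trans hk)
  refine ⟨⟨k, hk, eq_k⟩, fun j hj => ?_⟩
  simpa [eq_k j hj] using hkn
end

section
/- Let F be a field of characteristic 0 and let A ∈ M_n(F) be a nil-clean matrix. Then A is unipotent if and only if the trace of A equals n·1, where n·1 denotes the image of the integer n in F. -/
/-! Nilpotent matrices have trace `0`, and over a field of characteristic `0` an idempotent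
matrix has trace equal to its rank. So if `A = E + N` has trace `n`, the idempotent `1 - E`
has trace `0`, hence vanishes, and `A - 1 = N` is nilpotent. -/

namespace Matrix

variable {ι K : Type*} [Fintype ι] [DecidableEq ι]

theorem trace_eq_zero_of_isNilpotent {R : Type*} [CommRing R] [IsReduced R]
    {N : Matrix ι ι R} (hN : IsNilpotent N) : N.trace = 0 :=
  (isNilpotent_trace_of_isNilpotent hN).eq_zero

variable [Field K] [CharZero K]

theorem IsIdempotentElem.eq_zero_of_trace_eq_zero {E : Matrix ι ι K} (hE : IsIdempotentElem E)
    (htr : E.trace = 0) : E = 0 := by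
  have hf : IsIdempotentElem (toLin' E) := hE.map toLinAlgEquiv'
  have hf0 : toLin' E = 0 :=
    LinearMap.IsIdempotentElem.eq_zero_of_trace_eq_zero hf (by rwa [trace_toLin'_eq])
  exact toLin'.injective (by rw [hf0, map_zero])

theorem IsIdempotentElem.eq_one_of_trace_eq_card {E : Matrix ι ι K} (hE : IsIdempotentElem E)
    (htr : E.trace = Fintype.card ι) : E = 1 := by
  have hcompl : (1 - E).trace = 0 := by rw [trace_sub, trace_one, htr, sub_self]
  exact (sub_eq_zero.mp (IsIdempotentElem.eq_zero_of_trace_eq_zero hE.one_sub hcompl)).symm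

end Matrix

/-- Over a field of characteristic `0`, a nil-clean `n × n` matrix is unipotent
iff its trace is `n·1`. -/
theorem stmt_7 {F : Type*} [Field F] [CharZero F] {n : ℕ}
    (A : Matrix (Fin n) (Fin n) F) (hA : IsNilClean A) :
    IsNilpotent (A - 1) ↔ A.trace = (n : F) := by
  obtain ⟨E, N, hE, hN, rfl⟩ := hA
  constructor
  · intro hunip
    have := Matrix.trace_eq_zero_of_isNilpotent hunip
    rwa [Matrix.trace_sub, Matrix.trace_one, Fintype.card_fin, sub_eq_zero] at this
  · intro htr
    rw [Matrix.trace_add, Matrix.trace_eq_zero_of_isNilpotent hN, add_zero] at htr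
    have hE1 : E = 1 := Matrix.IsIdempotentElem.eq_one_of_trace_eq_card
      ((sq E).symm.trans hE) (by rwa [Fintype.card_fin])
    simpa [hE1] using hN
end
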